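/- The axiom □(○φ⇒φ) ⇒ (◇φ⇒φ) is valid on every Gödel temporal bi-relational model. -/

import Mathlib

/-- Formulas of the Gödel temporal language. -/
inductive GF where
  | var : Nat → GF
  | and : GF → GF → GF
  | or : GF → GF → GF
  | imp : GF → GF → GF
  | coimp : GF → GF → GF
  | next : GF → GF
  | dia : GF → GF
  | box : GF → GF
deriving DecidableEq

/-- ⊥ := p ⇐ p -/
def GF.bot : GF := .coimp (.var 0) (.var 0)
/-- ⊤ := p ⇒ p -/
def GF.top : GF := .imp (.var 0) (.var 0)
/-- ¬φ := φ ⇒ ⊥ -/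
def GF.neg (φ : GF) : GF := .imp φ .bot
/-- φ ⟺ ψ := (φ⇒ψ) ∧ (ψ⇒φ) -/
def GF.iffF (φ ψ : GF) : GF := .and (.imp φ ψ) (.imp ψ φ)

/-- A Gödel temporal bi-relational model: (W,≤) a linear order, S : T → T,
and a valuation satisfying the standard semantic clauses. -/
structure BiModel where
  W : Type
  T : Type
  [ord : LinearOrder W]
  S : T → T
  val : GF → W → T → Prop
  var_dc : ∀ n w v t, val (.var n) w t → ord.le v w → val (.var n) v t
  and_iff : ∀ φ ψ w t, val (.and φ ψ) w t ↔ (val φ w t ∧ val ψ w t)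
  or_iff : ∀ φ ψ w t, val (.or φ ψ) w t ↔ (val φ w t ∨ val ψ w t)
  imp_iff : ∀ φ ψ w t, val (.imp φ ψ) w t ↔ (∀ v, ord.le v w → val φ v t → val ψ v t)
  coimp_iff : ∀ φ ψ w t, val (.coimp φ ψ) w t ↔ (∃ v, ord.le w v ∧ val φ v t ∧ ¬ val ψ v t)
  next_iff : ∀ φ w t, val (.next φ) w t ↔ val φ w (S t)
  dia_iff : ∀ φ w t, val (.dia φ) w t ↔ (∃ n : ℕ, val φ w (S^[n] t))
  box_iff : ∀ φ w t, val (.box φ) w t ↔ (∀ n : ℕ, val φ w (S^[n] t))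

namespace BiModel

variable (M : BiModel) {φ : GF} {u : M.W} {t : M.T}

theorem val_of_val_iterate (hstep : ∀ k, M.val φ u (M.S^[k + 1] t) → M.val φ u (M.S^[k] t))
    {n : ℕ} (hn : M.val φ u (M.S^[n] t)) : M.val φ u t := by
  induction n with
  | zero => exact hn
  | succ n ih => exact ih (hstep n hn)

theorem val_of_val_box_next_imp {v : M.W} (hbox : M.val (.box (.imp (.next φ) φ)) v t)
    (huv : M.ord.le u v) (k : ℕ) : M.val φ u (M.S^[k + 1] t) → M.val φ u (M.S^[k] t) := by
  intro hφ
  have hind := (M.imp_iff _ _ _ _).mp ((M.box_iff _ _ _).mp hbox k) u huv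
  rw [M.next_iff, ← Function.iterate_succ_apply' M.S] at hind
  exact hind hφ

end BiModel

/-- The axiom □(○φ⇒φ) ⇒ (◇φ⇒φ) is globally true on every bi-relational model. -/
theorem stmt6 (M : BiModel) (φ : GF) (w : M.W) (t : M.T) :
    M.val (.imp (.box (.imp (.next φ) φ)) (.imp (.dia φ) φ)) w t := by
  refine (M.imp_iff _ _ _ _).mpr fun v _ hbox => (M.imp_iff _ _ _ _).mpr fun u huv hdia => ?_
  obtain ⟨n, hn⟩ := (M.dia_iff _ _ _).mp hdia
  exact M.val_of_val_iterate (M.val_of_val_box_next_imp hbox huv) hn
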